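/- arXiv:1803.11011 — 4 statements merged into one kernel-verified Lean document; each statement's English description precedes it below -/
import Mathlib

section
/- Let Q_0 = p_j, Q_1 = q_j and let S_j be a bounded operator acting only on the j-th factor of the tensor product. Then for μ, ν ∈ {0,1}, Q_μ f̂ S_j Q_ν = Q_μ S_j f̂_{μ-ν} Q_ν, where f̂_d is the shifted weighted operator. -/
/-!
Split every term of `symP N p q k` at its `j₀`-th factor: `symP k = p j₀ * C₀ k + q j₀ * C₁ k`,
where `C_μ = symPSlice p q j₀ μ` sums the terms with `j₀ ∉ J` (`μ = 0`) resp. `j₀ ∈ J`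
(`μ = 1`), with the `j₀`-th factor deleted. Built from the factors `i ≠ j₀` only, `C_μ k`
commutes with `S`, `p j₀` and `q j₀`, so orthogonality of `Q₀ = p j₀` and `Q₁ = q j₀` gives
`Q_μ (symP k) = Q_μ C_μ k` and `(symP k) Q_ν = C_ν k Q_ν`. Deleting `j₀` from `J` lowers the
particle number by one, `C₁ (k + 1) = C₀ k`, and this is the shift of the weight by `μ - ν`.
-/

noncomputable section

def symP {E : Type*} [NormedAddCommGroup E] [InnerProductSpace ℂ E]
    (N : ℕ) (p q : Fin N → E →L[ℂ] E) (k : ℕ) : E →L[ℂ] E :=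
  ∑ J ∈ Finset.powersetCard k (Finset.univ : Finset (Fin N)),
    ((List.finRange N).map (fun j => if j ∈ J then q j else p j)).prod

def hatW {E : Type*} [NormedAddCommGroup E] [InnerProductSpace ℂ E]
    (N : ℕ) (P : ℕ → E →L[ℂ] E) (f : ℕ → ℝ) : E →L[ℂ] E :=
  ∑ k ∈ Finset.range (N + 1), (f k : ℂ) • P k

def hatShiftW {E : Type*} [NormedAddCommGroup E] [InnerProductSpace ℂ E]
    (N : ℕ) (P : ℕ → E →L[ℂ] E) (f : ℕ → ℝ) (d : ℤ) : E →L[ℂ] E :=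
  ∑ j ∈ Finset.range (N + 1),
    (if 0 ≤ (j : ℤ) + d ∧ (j : ℤ) + d ≤ (N : ℤ) then ((f ((j : ℤ) + d).toNat : ℝ) : ℂ) else 0) • P j


open Finset Function

theorem List.prod_map_eq_mul_prod_map_update {ι M : Type*} [DecidableEq ι] [Monoid M]
    {l : List ι} (hl : l.Nodup) {i : ι} (hi : i ∈ l) (g : ι → M)
    (hg : ∀ j ∈ l, Commute (g i) (g j)) :
    (l.map g).prod = g i * (l.map (update g i 1)).prod := by
  induction l with
  | nil => simp at hi
  | cons a t ih =>
    obtain ⟨hat, ht⟩ := List.nodup_cons.mp hl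
    rcases eq_or_ne a i with rfl | hne
    · have : t.map (update g a 1) = t.map g :=
        List.map_congr_left fun j hj => update_of_ne (fun h : j = a => hat (h ▸ hj)) _ _
      simp [this]
    · have hit : i ∈ t := (List.mem_cons.mp hi).resolve_left hne.symm
      rw [List.map_cons, List.map_cons, List.prod_cons, List.prod_cons,
        ih ht hit fun j hj => hg j (List.mem_cons_of_mem _ hj), update_of_ne hne,
        ← mul_assoc, ← mul_assoc, (hg a List.mem_cons_self).eq]

theorem IsIdempotentElem.pair_mul_pair {R : Type*} [Ring R] {P Q : R} (hP : IsIdempotentElem P)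
    (hQ : Q = 1 - P) (μ ν : Fin 2) :
    ![P, Q] μ * ![P, Q] ν = if μ = ν then ![P, Q] μ else 0 := by
  subst hQ
  fin_cases μ <;> fin_cases ν <;>
    simp [hP.eq, hP.mul_one_sub_self, hP.one_sub_mul_self, hP.one_sub.eq]

section Slices

variable {R : Type*} {N : ℕ} (p q : Fin N → R) (j₀ : Fin N)

def symPFactor (J : Finset (Fin N)) (i : Fin N) : R := if i ∈ J then q i else p i

def occupation (J : Finset (Fin N)) : Fin 2 := if j₀ ∈ J then 1 else 0

variable {p q j₀} in
lemma symPFactor_self (J : Finset (Fin N)) :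
    symPFactor p q J j₀ = ![p j₀, q j₀] (occupation j₀ J) := by
  unfold symPFactor occupation
  split_ifs <;> rfl

variable [Ring R]

def symPRest (J : Finset (Fin N)) : R :=
  ((List.finRange N).map (update (symPFactor p q J) j₀ 1)).prod

def symPSlice (μ : Fin 2) (k : ℕ) : R :=
  ∑ J ∈ (powersetCard k univ).filter (fun J => occupation j₀ J = μ), symPRest p q j₀ J

variable {p q j₀}

lemma Commute.symPFactor_right (hq : ∀ j, q j = 1 - p j) {T : R} {i : Fin N}
    (hT : Commute T (p i)) (J : Finset (Fin N)) : Commute T (symPFactor p q J i) := by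
  unfold symPFactor
  split_ifs
  · exact hq i ▸ (Commute.one_right T).sub_right hT
  · exact hT

lemma commute_symPRest (hq : ∀ j, q j = 1 - p j) {T : R}
    (hT : ∀ i, i ≠ j₀ → Commute T (p i)) (J : Finset (Fin N)) :
    Commute T (symPRest p q j₀ J) := by
  refine Commute.list_prod_right _ _ fun x hx => ?_
  obtain ⟨i, -, rfl⟩ := List.mem_map.mp hx
  rcases eq_or_ne i j₀ with rfl | hi
  · simp
  · rw [update_of_ne hi]
    exact (hT i hi).symPFactor_right hq J

lemma commute_symPSlice (hq : ∀ j, q j = 1 - p j) {T : R}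
    (hT : ∀ i, i ≠ j₀ → Commute T (p i)) (μ : Fin 2) (k : ℕ) :
    Commute T (symPSlice p q j₀ μ k) :=
  Commute.sum_right _ _ _ fun J _ => commute_symPRest hq hT J

lemma prod_map_symPFactor (hcomm : ∀ i j, Commute (p i) (p j)) (hq : ∀ j, q j = 1 - p j)
    (J : Finset (Fin N)) :
    ((List.finRange N).map (symPFactor p q J)).prod
      = ![p j₀, q j₀] (occupation j₀ J) * symPRest p q j₀ J := by
  rw [List.prod_map_eq_mul_prod_map_update (List.nodup_finRange N) (List.mem_finRange j₀),
    symPFactor_self, symPRest]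
  intro i _
  exact ((hcomm j₀ i).symPFactor_right hq J).symm.symPFactor_right hq J |>.symm

omit [Ring R] in
lemma occupation_eq_one {J : Finset (Fin N)} : occupation j₀ J = 1 ↔ j₀ ∈ J := by
  unfold occupation; split_ifs <;> simp_all

omit [Ring R] in
lemma occupation_eq_zero {J : Finset (Fin N)} : occupation j₀ J = 0 ↔ j₀ ∉ J := by
  unfold occupation; split_ifs <;> simp_all

lemma symPRest_erase_self (J : Finset (Fin N)) :
    symPRest p q j₀ (J.erase j₀) = symPRest p q j₀ J := by
  unfold symPRest
  congr 2
  ext i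
  rcases eq_or_ne i j₀ with rfl | hi
  · simp
  · simp [symPFactor, hi]

lemma symPSlice_one_succ (k : ℕ) : symPSlice p q j₀ 1 (k + 1) = symPSlice p q j₀ 0 k := by
  refine sum_nbij' (·.erase j₀) (insert j₀) ?_ ?_ ?_ ?_ ?_
  · intro J hJ
    simp_all [occupation_eq_one, occupation_eq_zero, card_erase_of_mem]
  · intro J hJ
    simp_all [occupation_eq_one, occupation_eq_zero, card_insert_of_notMem]
  · intro J hJ
    simp_all [occupation_eq_one]
  · intro J hJ
    simp_all [occupation_eq_zero]
  · intro J _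
    exact (symPRest_erase_self J).symm

lemma symPSlice_one_zero : symPSlice p q j₀ 1 0 = 0 := by
  refine sum_eq_zero fun J hJ => absurd hJ ?_
  simp +contextual [occupation_eq_one]

lemma symPSlice_zero_card : symPSlice p q j₀ 0 N = 0 := by
  refine sum_eq_zero fun J hJ => absurd (mem_filter.mp hJ) ?_
  rintro ⟨hcard, hj₀⟩
  have hJ : J = univ := (card_eq_iff_eq_univ J).mp (by simpa using hcard)
  exact occupation_eq_zero.mp hj₀ (hJ ▸ mem_univ j₀)

end Slices

section WeightedSums

variable {E : Type*} [NormedAddCommGroup E] [InnerProductSpace ℂ E] {N : ℕ}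
  {P P' : ℕ → E →L[ℂ] E} (f : ℕ → ℝ)

lemma hatShiftW_zero : hatShiftW N P f 0 = hatW N P f := by
  refine sum_congr rfl fun k hk => ?_
  have hkN : (k : ℤ) ≤ N := by exact_mod_cast Nat.lt_succ_iff.mp (mem_range.mp hk)
  simp [hkN]

lemma hatW_eq_hatShiftW_one (h₀ : P' 0 = 0) (hsucc : ∀ k, P' (k + 1) = P k) :
    hatW N P' f = hatShiftW N P f 1 := by
  rw [hatW, hatShiftW, sum_range_succ', sum_range_succ, h₀, smul_zero, add_zero,
    if_neg (by omega), zero_smul, add_zero]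
  refine sum_congr rfl fun k hk => ?_
  have hkN : (k : ℤ) + 1 ≤ N := by exact_mod_cast mem_range.mp hk
  rw [hsucc, if_pos ⟨by omega, hkN⟩]
  norm_cast

lemma hatW_eq_hatShiftW_neg_one (hN : P N = 0) (hsucc : ∀ k, P' (k + 1) = P k) :
    hatW N P f = hatShiftW N P' f (-1) := by
  rw [hatW, hatShiftW, sum_range_succ, sum_range_succ', hN, smul_zero, add_zero,
    if_neg (by omega), zero_smul, add_zero]
  refine sum_congr rfl fun k hk => ?_
  have hkN : (k : ℤ) ≤ N := by exact_mod_cast (mem_range.mp hk).le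
  rw [hsucc, if_pos ⟨by omega, by omega⟩]
  push_cast
  simp

lemma Commute.hatW_right {T : E →L[ℂ] E} (h : ∀ k, Commute T (P k)) :
    Commute T (hatW N P f) :=
  Commute.sum_right _ _ _ fun k _ => (h k).smul_right _

lemma mul_hatW_congr {T : E →L[ℂ] E} (h : ∀ k, T * P k = T * P' k) :
    T * hatW N P f = T * hatW N P' f := by
  simp only [hatW, mul_sum, mul_smul_comm, h]

lemma hatShiftW_mul_congr {T : E →L[ℂ] E} (h : ∀ k, P k * T = P' k * T) (d : ℤ) :
    hatShiftW N P f d * T = hatShiftW N P' f d * T := by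
  simp only [hatShiftW, sum_mul, smul_mul_assoc, h]

end WeightedSums

section SymP

variable {E : Type*} [NormedAddCommGroup E] [InnerProductSpace ℂ E] {N : ℕ}
  {p q : Fin N → E →L[ℂ] E} (hidem : ∀ j, IsIdempotentElem (p j))
  (hcomm : ∀ i j, Commute (p i) (p j)) (hq : ∀ j, q j = 1 - p j) (j₀ : Fin N)

lemma symP_eq_sum (k : ℕ) :
    symP N p q k = ∑ J ∈ powersetCard k univ, ((List.finRange N).map (symPFactor p q J)).prod :=
  rfl

include hcomm hq in
lemma commute_pair (ν : Fin 2) (i : Fin N) : Commute (![p j₀, q j₀] ν) (p i) := by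
  fin_cases ν
  · exact hcomm j₀ i
  · exact hq j₀ ▸ (Commute.one_left _).sub_left (hcomm j₀ i)

include hidem hcomm hq in
lemma pair_mul_symP (μ : Fin 2) (k : ℕ) :
    ![p j₀, q j₀] μ * symP N p q k = ![p j₀, q j₀] μ * symPSlice p q j₀ μ k := by
  simp only [symP_eq_sum, symPSlice, mul_sum, sum_filter]
  refine sum_congr rfl fun J _ => ?_
  rw [prod_map_symPFactor hcomm hq, ← mul_assoc, (hidem j₀).pair_mul_pair (hq j₀)]
  split_ifs <;> simp_all [eq_comm]

include hidem hcomm hq in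
lemma symP_mul_pair (ν : Fin 2) (k : ℕ) :
    symP N p q k * ![p j₀, q j₀] ν = symPSlice p q j₀ ν k * ![p j₀, q j₀] ν := by
  simp only [symP_eq_sum, symPSlice, sum_mul, sum_filter]
  refine sum_congr rfl fun J _ => ?_
  have hrest := commute_symPRest (j₀ := j₀) hq (fun i _ => commute_pair hcomm hq j₀ ν i) J
  rw [prod_map_symPFactor hcomm hq, mul_assoc, ← hrest.eq, ← mul_assoc,
    (hidem j₀).pair_mul_pair (hq j₀)]
  split_ifs with h
  · rw [h, hrest.eq]
  · simp

lemma hatW_symPSlice_eq_hatShiftW (f : ℕ → ℝ) (μ ν : Fin 2) :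
    hatW N (symPSlice p q j₀ μ) f
      = hatShiftW N (symPSlice p q j₀ ν) f (((μ : ℕ) : ℤ) - ((ν : ℕ) : ℤ)) := by
  fin_cases μ <;> fin_cases ν
  · exact (hatShiftW_zero f).symm
  · exact hatW_eq_hatShiftW_neg_one f symPSlice_zero_card symPSlice_one_succ
  · exact hatW_eq_hatShiftW_one f symPSlice_one_zero symPSlice_one_succ
  · exact (hatShiftW_zero f).symm

end SymP

end

theorem stmt4_general {E : Type*} [NormedAddCommGroup E] [InnerProductSpace ℂ E]
    (N : ℕ) (p q : Fin N → E →L[ℂ] E)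
    (hidem : ∀ j, IsIdempotentElem (p j))
    (hcomm : ∀ i j, Commute (p i) (p j))
    (hq : ∀ j, q j = 1 - p j)
    (f : ℕ → ℝ)
    (j₀ : Fin N) (S : E →L[ℂ] E)
    (hS : ∀ i, i ≠ j₀ → Commute S (p i)) :
    ∀ μ ν : Fin 2,
      (![p j₀, q j₀] μ) * hatW N (symP N p q) f * S * (![p j₀, q j₀] ν) =
      (![p j₀, q j₀] μ) * S * hatShiftW N (symP N p q) f (((μ : ℕ) : ℤ) - ((ν : ℕ) : ℤ))
        * (![p j₀, q j₀] ν) := by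
  intro μ ν
  set Q := ![p j₀, q j₀]
  calc Q μ * hatW N (symP N p q) f * S * Q ν
      = Q μ * hatW N (symPSlice p q j₀ μ) f * S * Q ν := by
        rw [mul_hatW_congr f (pair_mul_symP hidem hcomm hq j₀ μ)]
    _ = Q μ * S * hatW N (symPSlice p q j₀ μ) f * Q ν := by
        rw [mul_assoc (Q μ), ← ((Commute.hatW_right f fun k =>
          commute_symPSlice hq hS μ k).eq), ← mul_assoc]
    _ = Q μ * S * hatShiftW N (symPSlice p q j₀ ν) f (((μ : ℕ) : ℤ) - ((ν : ℕ) : ℤ))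
          * Q ν := by
        rw [hatW_symPSlice_eq_hatShiftW j₀ f μ ν]
    _ = Q μ * S * hatShiftW N (symP N p q) f (((μ : ℕ) : ℤ) - ((ν : ℕ) : ℤ)) * Q ν := by
        rw [mul_assoc _ _ (Q ν), mul_assoc _ _ (Q ν),
          hatShiftW_mul_congr f (symP_mul_pair hidem hcomm hq j₀ ν)]

theorem stmt4 {E : Type*} [NormedAddCommGroup E] [InnerProductSpace ℂ E] [CompleteSpace E]
    (N : ℕ) (p q : Fin N → E →L[ℂ] E)
    (hidem : ∀ j, IsIdempotentElem (p j))
    (hsa : ∀ j, IsSelfAdjoint (p j))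
    (hcomm : ∀ i j, Commute (p i) (p j))
    (hq : ∀ j, q j = 1 - p j)
    (f : ℕ → ℝ) (hf : ∀ k, 0 ≤ f k)
    (j₀ : Fin N) (S : E →L[ℂ] E)
    (hS : ∀ i, i ≠ j₀ → Commute S (p i)) :
    ∀ μ ν : Fin 2,
      (![p j₀, q j₀] μ) * hatW N (symP N p q) f * S * (![p j₀, q j₀] ν) =
      (![p j₀, q j₀] μ) * S * hatShiftW N (symP N p q) f (((μ : ℕ) : ℤ) - ((ν : ℕ) : ℤ))
        * (![p j₀, q j₀] ν) :=
  stmt4_general N p q hidem hcomm hq f j₀ S hS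
end

section
/- If ψ ∈ L²(ℝ^{3N}) is symmetric under exchange of all variables in a set M₁ containing 1, then for any weight f, ‖f̂ q_1 ψ‖² ≤ (N/|M₁|) ‖f̂ n̂ ψ‖². -/
/-!
The operators `P_k = symP N p q k` are the spectral projections of the number operator
`∑ j, q j`: they are mutually orthogonal projections commuting with every `q j`, and
`∑ j, q j * P_k = k • P_k`.
Hence `∑ j, ‖f̂ q_j ψ‖² = ⟪ψ, ∑ k, k f(k)² P_k ψ⟫ = N ‖f̂ n̂ ψ‖²`. A transposition of `1` and
`j ∈ M₁` fixes `ψ`, commutes with `f̂` and carries `q_1` to `q_j`, so the `|M₁|` terms with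
`j ∈ M₁` all equal `‖f̂ q_1 ψ‖²`; dropping the other terms gives the bound.
-/

noncomputable section

open scoped ComplexInnerProductSpace

namespace List

variable {ι M : Type*} [Monoid M]

theorem prod_map_mul_of_commute {a b : ι → M} (h : ∀ i j, Commute (a i) (b j)) :
    ∀ l : List ι, (l.map fun i => a i * b i).prod = (l.map a).prod * (l.map b).prod
  | [] => by simp
  | x :: l => by
      have hc : Commute (b x) (l.map a).prod := Commute.list_prod_right _ _ fun y hy => by
        obtain ⟨i, -, rfl⟩ := mem_map.mp hy
        exact (h i x).symm
      simp only [map_cons, prod_cons, prod_map_mul_of_commute h l]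
      rw [mul_assoc, hc.left_comm, ← mul_assoc, ← mul_assoc]

theorem _root_.SemiconjBy.list_prod_map {u : M} {a b : ι → M}
    (h : ∀ i, SemiconjBy u (a i) (b i)) :
    ∀ l : List ι, SemiconjBy u (l.map a).prod (l.map b).prod
  | [] => by simp
  | x :: l => by simpa using (h x).mul_right (SemiconjBy.list_prod_map h l)

theorem _root_.IsSelfAdjoint.list_prod [StarMul M] :
    ∀ {l : List M}, (∀ x ∈ l, IsSelfAdjoint x) → l.Pairwise Commute → IsSelfAdjoint l.prod
  | [], _, _ => by simp
  | a :: l, h, hl => by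
      rw [prod_cons]
      refine (IsSelfAdjoint.commute_iff (h a mem_cons_self)
        (IsSelfAdjoint.list_prod (fun x hx => h x (mem_cons_of_mem a hx)) hl.of_cons)).mp ?_
      exact Commute.list_prod_right _ _ (pairwise_cons.mp hl).1

end List

section ProdPQ

variable {R : Type*} [Ring R] {N : ℕ} {p q : Fin N → R}

def prodPQ (p q : Fin N → R) (J : Finset (Fin N)) : R :=
  ((List.finRange N).map fun j => if j ∈ J then q j else p j).prod

variable (hcomm : ∀ i j, Commute (p i) (p j)) (hq : ∀ j, q j = 1 - p j)
include hcomm hq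

theorem commute_ite_ite (J J' : Finset (Fin N)) (i j : Fin N) :
    Commute (if i ∈ J then q i else p i) (if j ∈ J' then q j else p j) := by
  have h := hcomm i j
  have h₁ : Commute (1 - p i) (p j) := (Commute.one_left _).sub_left h
  simp only [hq]
  split_ifs
  exacts [(Commute.one_right _).sub_right h₁, h₁, (Commute.one_right _).sub_right h, h]

theorem pairwise_commute_ite (J : Finset (Fin N)) (l : List (Fin N)) :
    (l.map fun j => if j ∈ J then q j else p j).Pairwise Commute :=
  List.pairwise_map.mpr (List.pairwise_of_forall fun i j => commute_ite_ite hcomm hq J J i j)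

theorem prodPQ_eq_ite_mul (J : Finset (Fin N)) (j : Fin N) :
    prodPQ p q J = (if j ∈ J then q j else p j) *
      (((List.finRange N).erase j).map fun i => if i ∈ J then q i else p i).prod := by
  rw [prodPQ, ((List.perm_cons_erase (List.mem_finRange j)).map _).prod_eq'
    (pairwise_commute_ite hcomm hq J _), List.map_cons, List.prod_cons]

theorem commute_q_prodPQ (j : Fin N) (J : Finset (Fin N)) : Commute (q j) (prodPQ p q J) :=
  Commute.list_prod_right _ _ fun x hx => by
    obtain ⟨i, -, rfl⟩ := List.mem_map.mp hx
    simpa using commute_ite_ite hcomm hq Finset.univ J j i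

theorem semiconjBy_prodPQ {u : R} {σ : Equiv.Perm (Fin N)}
    (hu : ∀ j, SemiconjBy u (p j) (p (σ j))) (J : Finset (Fin N)) :
    SemiconjBy u (prodPQ p q J) (prodPQ p q (J.map σ.toEmbedding)) := by
  have hfac : ∀ i, SemiconjBy u (if i ∈ J then q i else p i)
      (if σ i ∈ J.map σ.toEmbedding then q (σ i) else p (σ i)) := by
    intro i
    simp only [Finset.mem_map_equiv, Equiv.symm_apply_apply, hq]
    split_ifs
    exacts [(SemiconjBy.one_right u).sub_right (hu i), hu i]
  have h : SemiconjBy u (prodPQ p q J) (((List.finRange N).map σ).map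
      fun j => if j ∈ J.map σ.toEmbedding then q j else p j).prod := by
    rw [List.map_map]
    exact SemiconjBy.list_prod_map hfac _
  rwa [((Equiv.Perm.map_finRange_perm σ).map _).prod_eq' (pairwise_commute_ite hcomm hq _ _)] at h

theorem isSelfAdjoint_prodPQ [StarRing R] (hsa : ∀ j, IsSelfAdjoint (p j))
    (J : Finset (Fin N)) : IsSelfAdjoint (prodPQ p q J) := by
  refine IsSelfAdjoint.list_prod (fun x hx => ?_) (pairwise_commute_ite hcomm hq J _)
  obtain ⟨i, -, rfl⟩ := List.mem_map.mp hx
  split_ifs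
  exacts [hq i ▸ (IsSelfAdjoint.one R).sub (hsa i), hsa i]

variable (hp : ∀ j, IsIdempotentElem (p j))
include hp

theorem q_mul_prodPQ (j : Fin N) (J : Finset (Fin N)) :
    q j * prodPQ p q J = if j ∈ J then prodPQ p q J else 0 := by
  rw [prodPQ_eq_ite_mul hcomm hq J j, ← mul_assoc, hq]
  split_ifs
  · rw [(hp j).one_sub.eq]
  · rw [(hp j).one_sub_mul_self, zero_mul]

theorem prodPQ_mul_prodPQ (J J' : Finset (Fin N)) :
    prodPQ p q J * prodPQ p q J' = if J = J' then prodPQ p q J else 0 := by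
  rw [prodPQ, prodPQ, ← List.prod_map_mul_of_commute (commute_ite_ite hcomm hq J J')]
  split_ifs with hJ
  · subst hJ
    congr 1
    refine List.map_congr_left fun i _ => ?_
    split_ifs
    · rw [hq, (hp i).one_sub.eq]
    · exact (hp i).eq
  · obtain ⟨j, hj⟩ : ∃ j, ¬(j ∈ J ↔ j ∈ J') := by
      by_contra! h
      exact hJ (Finset.ext h)
    refine List.prod_eq_zero (List.mem_map.mpr ⟨j, List.mem_finRange j, ?_⟩)
    by_cases h : j ∈ J
    · have h' : j ∉ J' := fun h' => hj (iff_of_true h h')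
      simp only [h, h', if_true, if_false, hq]
      exact (hp j).one_sub_mul_self
    · have h' : j ∈ J' := by_contra fun h' => hj (iff_of_false h h')
      simp only [h, h', if_true, if_false, hq]
      exact (hp j).mul_one_sub_self

end ProdPQ

section WeightedOperator

variable {E : Type*} [NormedAddCommGroup E] [InnerProductSpace ℂ E] {N : ℕ} {P : ℕ → E →L[ℂ] E}

theorem hatW_mul_hatW (hP : ∀ k m, P k * P m = if k = m then P k else 0) (f g : ℕ → ℝ) :
    hatW N P f * hatW N P g = hatW N P fun k => f k * g k := by
  simp only [hatW, Finset.sum_mul_sum, smul_mul_smul_comm, hP, smul_ite, smul_zero,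
    Finset.sum_ite_eq]
  refine Finset.sum_congr rfl fun k hk => ?_
  rw [if_pos hk, Complex.ofReal_mul]

theorem commute_hatW {a : E →L[ℂ] E} (h : ∀ k, Commute a (P k)) (f : ℕ → ℝ) :
    Commute a (hatW N P f) :=
  Commute.sum_right _ _ _ fun k _ => (h k).smul_right _

theorem isSelfAdjoint_hatW [CompleteSpace E] (h : ∀ k, IsSelfAdjoint (P k)) (f : ℕ → ℝ) :
    IsSelfAdjoint (hatW N P f) :=
  isSelfAdjoint_sum _ fun k _ =>
    ((Complex.im_eq_zero_iff_isSelfAdjoint _).mp (Complex.ofReal_im _)).smul (h k)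

theorem hatW_const_mul (c : ℝ) (f : ℕ → ℝ) :
    hatW N P (fun k => c * f k) = (c : ℂ) • hatW N P f := by
  simp only [hatW, Finset.smul_sum, smul_smul, Complex.ofReal_mul]

theorem hatW_mul_sqrt_eq_smul (hP : ∀ k m, P k * P m = if k = m then P k else 0)
    (hN : 0 < N) (f : ℕ → ℝ) :
    hatW N P (fun k => f k * √k) = (√N : ℂ) • (hatW N P f * hatW N P fun k => √(k / N)) := by
  have hsqrtN : √(N : ℝ) ≠ 0 := by positivity
  rw [hatW_mul_hatW hP, ← hatW_const_mul]
  congr 1 with k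
  rw [Real.sqrt_div' _ (Nat.cast_nonneg N)]
  field_simp

end WeightedOperator

section NumberProjections

variable {E : Type*} [NormedAddCommGroup E] [InnerProductSpace ℂ E] {N : ℕ}
  {p q : Fin N → E →L[ℂ] E}

theorem symP_eq_sum_prodPQ (k : ℕ) :
    symP N p q k = ∑ J ∈ Finset.powersetCard k Finset.univ, prodPQ p q J := rfl

variable (hcomm : ∀ i j, Commute (p i) (p j)) (hq : ∀ j, q j = 1 - p j)
include hcomm hq

theorem commute_q_symP (j : Fin N) (k : ℕ) : Commute (q j) (symP N p q k) :=
  Commute.sum_right _ _ _ fun J _ => commute_q_prodPQ hcomm hq j J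

theorem commute_symP_of_semiconjBy {u : E →L[ℂ] E} {σ : Equiv.Perm (Fin N)}
    (hu : ∀ j, SemiconjBy u (p j) (p (σ j))) (k : ℕ) : Commute u (symP N p q k) := by
  rw [Commute, SemiconjBy, symP_eq_sum_prodPQ, Finset.mul_sum, Finset.sum_mul]
  simp_rw [(semiconjBy_prodPQ hcomm hq hu _).eq]
  conv_rhs => rw [← Finset.univ_map_equiv_to_embedding σ, Finset.powersetCard_map,
    Finset.sum_map]
  rfl

theorem isSelfAdjoint_symP [CompleteSpace E] (hsa : ∀ j, IsSelfAdjoint (p j)) (k : ℕ) :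
    IsSelfAdjoint (symP N p q k) :=
  isSelfAdjoint_sum _ fun J _ => isSelfAdjoint_prodPQ hcomm hq hsa J

theorem hatW_q_apply_of_semiconjBy {u : E →L[ℂ] E} {σ : Equiv.Perm (Fin N)}
    (hu : ∀ j, SemiconjBy u (p j) (p (σ j))) (f : ℕ → ℝ) (i : Fin N) (x : E) :
    u (hatW N (symP N p q) f (q i x)) = hatW N (symP N p q) f (q (σ i) (u x)) := by
  have hq_semiconj : SemiconjBy u (q i) (q (σ i)) := by
    rw [hq, hq]
    exact (SemiconjBy.one_right u).sub_right (hu i)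
  have hW : Commute u (hatW N (symP N p q) f) :=
    commute_hatW (commute_symP_of_semiconjBy hcomm hq hu) f
  have h := SemiconjBy.mul_right hW hq_semiconj
  exact congr($(h.eq) x)

variable (hp : ∀ j, IsIdempotentElem (p j))
include hp

theorem symP_mul_symP (k m : ℕ) :
    symP N p q k * symP N p q m = if k = m then symP N p q k else 0 := by
  simp only [symP_eq_sum_prodPQ, Finset.sum_mul_sum, prodPQ_mul_prodPQ hcomm hq hp]
  split_ifs with hkm
  · subst hkm
    refine Finset.sum_congr rfl fun J hJ => ?_
    rw [Finset.sum_ite_eq, if_pos hJ]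
  · refine Finset.sum_eq_zero fun J hJ => Finset.sum_eq_zero fun J' hJ' => if_neg ?_
    rintro rfl
    exact hkm ((Finset.mem_powersetCard_univ.mp hJ).symm.trans
      (Finset.mem_powersetCard_univ.mp hJ'))

theorem sum_q_mul_symP (k : ℕ) : ∑ j, q j * symP N p q k = (k : ℂ) • symP N p q k := by
  simp only [symP_eq_sum_prodPQ, Finset.mul_sum, q_mul_prodPQ hcomm hq hp,
    Finset.smul_sum]
  rw [Finset.sum_comm]
  refine Finset.sum_congr rfl fun J hJ => ?_
  rw [Finset.sum_ite_mem, Finset.univ_inter, Finset.sum_const,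
    Finset.mem_powersetCard_univ.mp hJ, Nat.cast_smul_eq_nsmul]

theorem sum_q_mul_hatW (f : ℕ → ℝ) :
    ∑ j, q j * hatW N (symP N p q) f = hatW N (symP N p q) fun k => k * f k := by
  simp only [hatW, Finset.mul_sum, mul_smul_comm]
  rw [Finset.sum_comm]
  refine Finset.sum_congr rfl fun k _ => ?_
  rw [← Finset.smul_sum, sum_q_mul_symP hcomm hq hp, smul_smul, Complex.ofReal_mul,
    Complex.ofReal_natCast, mul_comm]

end NumberProjections

section Norms

variable {E : Type*} [NormedAddCommGroup E] [InnerProductSpace ℂ E] [CompleteSpace E]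

theorem IsSelfAdjoint.norm_apply_sq {A : E →L[ℂ] E} (hA : IsSelfAdjoint A) (x : E) :
    ‖A x‖ ^ 2 = RCLike.re ⟪x, (A * A) x⟫ := by
  rw [A.apply_norm_sq_eq_inner_adjoint_right, ← ContinuousLinearMap.star_eq_adjoint, hA.star_eq]
  rfl

variable {N : ℕ} {p q : Fin N → E →L[ℂ] E} (hcomm : ∀ i j, Commute (p i) (p j))
  (hq : ∀ j, q j = 1 - p j) (hp : ∀ j, IsIdempotentElem (p j)) (hsa : ∀ j, IsSelfAdjoint (p j))
include hcomm hq hp hsa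

theorem sum_norm_sq_hatW_q (f : ℕ → ℝ) (x : E) :
    ∑ j, ‖hatW N (symP N p q) f (q j x)‖ ^ 2 =
      ‖hatW N (symP N p q) (fun k => f k * √k) x‖ ^ 2 := by
  have hP := symP_mul_symP hcomm hq hp
  have hWsa := isSelfAdjoint_hatW (N := N) (isSelfAdjoint_symP hcomm hq hsa)
  set W := hatW N (symP N p q) f
  have hqW : ∀ j, Commute (q j) W := fun j => commute_hatW (commute_q_symP hcomm hq j) f
  have hWq_sa : ∀ j, IsSelfAdjoint (W * q j) := fun j =>
    (IsSelfAdjoint.commute_iff (hWsa f) (hq j ▸ (IsSelfAdjoint.one _).sub (hsa j))).mp (hqW j).symm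
  have hWq_sq : ∀ j, (W * q j) * (W * q j) = q j * hatW N (symP N p q) fun k => f k * f k := by
    intro j
    rw [(hqW j).mul_mul_mul_comm, hatW_mul_hatW hP, (hq j ▸ (hp j).one_sub :
      IsIdempotentElem (q j)).eq, ← (commute_hatW (commute_q_symP hcomm hq j) _).eq]
  calc ∑ j, ‖W (q j x)‖ ^ 2
      = ∑ j, RCLike.re ⟪x, (q j * hatW N (symP N p q) fun k => f k * f k) x⟫ :=
        Finset.sum_congr rfl fun j _ => by rw [← hWq_sq, ← (hWq_sa j).norm_apply_sq]; rfl
    _ = RCLike.re ⟪x, (∑ j, q j * hatW N (symP N p q) fun k => f k * f k) x⟫ := by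
        rw [sum_apply, inner_sum, map_sum]
    _ = RCLike.re ⟪x, (hatW N (symP N p q) (fun k => f k * √k) *
          hatW N (symP N p q) (fun k => f k * √k)) x⟫ := by
        rw [sum_q_mul_hatW hcomm hq hp, hatW_mul_hatW hP]
        congr 4 with k
        linear_combination (-(f k * f k)) * Real.mul_self_sqrt (Nat.cast_nonneg (α := ℝ) k)
    _ = ‖hatW N (symP N p q) (fun k => f k * √k) x‖ ^ 2 := ((hWsa _).norm_apply_sq x).symm

end Norms

theorem stmt7_general {E : Type*} [NormedAddCommGroup E] [InnerProductSpace ℂ E] [CompleteSpace E]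
    (N : ℕ) (hN : 0 < N) (p q : Fin N → E →L[ℂ] E)
    (hidem : ∀ j, IsIdempotentElem (p j))
    (hsa : ∀ j, IsSelfAdjoint (p j))
    (hcomm : ∀ i j, Commute (p i) (p j))
    (hq : ∀ j, q j = 1 - p j)
    (U : Equiv.Perm (Fin N) → E →L[ℂ] E)
    (hUinner : ∀ σ (x y : E), ⟪U σ x, U σ y⟫ = ⟪x, y⟫)
    (hUp : ∀ σ j, U σ * p j = p (σ j) * U σ)
    (M₁ : Finset (Fin N)) (hM₁ : (⟨0, hN⟩ : Fin N) ∈ M₁)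
    (f : ℕ → ℝ)
    (ψ : E)
    (hψ : ∀ σ : Equiv.Perm (Fin N), (∀ i ∉ M₁, σ i = i) → U σ ψ = ψ) :
    ‖(hatW N (symP N p q) f) ((q ⟨0, hN⟩) ψ)‖ ^ 2 ≤
      ((N : ℝ) / M₁.card) *
        ‖(hatW N (symP N p q) f)
          ((hatW N (symP N p q) (fun k => Real.sqrt ((k : ℝ) / N))) ψ)‖ ^ 2 := by
  set j₀ : Fin N := ⟨0, hN⟩
  set W := hatW N (symP N p q) f
  have hsum : ∑ j, ‖W (q j ψ)‖ ^ 2 =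
      N * ‖W (hatW N (symP N p q) (fun k => √(k / N)) ψ)‖ ^ 2 := by
    rw [sum_norm_sq_hatW_q hcomm hq hidem hsa, hatW_mul_sqrt_eq_smul
      (symP_mul_symP hcomm hq hidem) hN, smul_apply, norm_smul, mul_pow, Complex.norm_real,
      Real.norm_of_nonneg (Real.sqrt_nonneg _), Real.sq_sqrt (Nat.cast_nonneg N)]
    rfl
  have hU_norm : ∀ σ y, ‖U σ y‖ = ‖y‖ := fun σ =>
    ((U σ).toLinearMap.isometryOfInner (hUinner σ)).norm_map
  have hsymm : ∀ j ∈ M₁, ‖W (q j₀ ψ)‖ ^ 2 = ‖W (q j ψ)‖ ^ 2 := by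
    intro j hj
    have hfix : ∀ i ∉ M₁, Equiv.swap j₀ j i = i := fun i hi =>
      Equiv.swap_apply_of_ne_of_ne (by rintro rfl; exact hi hM₁) (by rintro rfl; exact hi hj)
    calc ‖W (q j₀ ψ)‖ ^ 2 = ‖U (Equiv.swap j₀ j) (W (q j₀ ψ))‖ ^ 2 := by rw [hU_norm]
      _ = ‖W (q j ψ)‖ ^ 2 := by
        rw [hatW_q_apply_of_semiconjBy hcomm hq (hUp _), Equiv.swap_apply_left, hψ _ hfix]
  have hcard : 0 < (M₁.card : ℝ) := by exact_mod_cast Finset.card_pos.mpr ⟨j₀, hM₁⟩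
  rw [div_mul_eq_mul_div, le_div_iff₀ hcard, ← hsum, mul_comm, ← nsmul_eq_mul]
  calc M₁.card • ‖W (q j₀ ψ)‖ ^ 2 ≤ ∑ j ∈ M₁, ‖W (q j ψ)‖ ^ 2 :=
        Finset.card_nsmul_le_sum _ _ _ fun j hj => (hsymm j hj).le
    _ ≤ ∑ j, ‖W (q j ψ)‖ ^ 2 :=
        Finset.sum_le_sum_of_subset_of_nonneg (Finset.subset_univ _) fun _ _ _ => sq_nonneg _

theorem stmt7 {E : Type*} [NormedAddCommGroup E] [InnerProductSpace ℂ E] [CompleteSpace E]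
    (N : ℕ) (hN : 0 < N) (p q : Fin N → E →L[ℂ] E)
    (hidem : ∀ j, IsIdempotentElem (p j))
    (hsa : ∀ j, IsSelfAdjoint (p j))
    (hcomm : ∀ i j, Commute (p i) (p j))
    (hq : ∀ j, q j = 1 - p j)
    (U : Equiv.Perm (Fin N) → E →L[ℂ] E)
    (hU1 : U 1 = 1)
    (hUmul : ∀ σ τ, U (σ * τ) = U σ * U τ)
    (hUinner : ∀ σ (x y : E), ⟪U σ x, U σ y⟫ = ⟪x, y⟫)
    (hUp : ∀ σ j, U σ * p j = p (σ j) * U σ)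
    (M₁ : Finset (Fin N)) (hM₁ : (⟨0, hN⟩ : Fin N) ∈ M₁)
    (f : ℕ → ℝ) (hf : ∀ k, 0 ≤ f k)
    (ψ : E)
    (hψ : ∀ σ : Equiv.Perm (Fin N), (∀ i ∉ M₁, σ i = i) → U σ ψ = ψ) :
    ‖(hatW N (symP N p q) f) ((q ⟨0, hN⟩) ψ)‖ ^ 2 ≤
      ((N : ℝ) / M₁.card) *
        ‖(hatW N (symP N p q) f)
          ((hatW N (symP N p q) (fun k => Real.sqrt ((k : ℝ) / N))) ψ)‖ ^ 2 :=
  stmt7_general N hN p q hidem hsa hcomm hq U hUinner hUp M₁ hM₁ f ψ hψ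

end
end

section
/- Let Γ, Λ ∈ L²(ℝ^{3N}) be symmetric in all variables of a set M with j ∉ M and k, l ∈ M, k ≠ l, and let O_{j,k} be an operator acting only on coordinates j and k. Then |⟨Γ, O_{j,k} Λ⟩| ≤ ‖Γ‖ (|⟨O_{j,k}Λ, O_{j,l}Λ⟩| + |M|^{-1} ‖O_{j,k}Λ‖²)^{1/2}. -/
/-!
Symmetry of `Γ` gives `⟪Γ, O_k Λ⟫ = ⟪Γ, f⟫` for the average `f = |M|⁻¹ ∑_{m ∈ M} O_m Λ`, so
Cauchy–Schwarz reduces the claim to a bound on `‖f‖²`. Expanding `‖f‖²`, the symmetry of `Λ`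
and the covariance of `O` make all `|M|` diagonal terms equal to `‖O_k Λ‖²` and carry every
off-diagonal pair `(m, m')` to `(k, l)` by a permutation of `M`.
-/

open scoped ComplexInnerProductSpace

open Finset

section Averaging

variable {𝕜 E ι : Type*} [RCLike 𝕜] [NormedAddCommGroup E] [InnerProductSpace 𝕜 E]

local notation "⟪" x ", " y "⟫" => inner 𝕜 x y

theorem norm_sum_sq_le_sum_sum_norm_inner (s : Finset ι) (v : ι → E) :
    ‖∑ i ∈ s, v i‖ ^ 2 ≤ ∑ i ∈ s, ∑ j ∈ s, ‖⟪v i, v j⟫‖ := calc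
  ‖∑ i ∈ s, v i‖ ^ 2 = ‖⟪∑ i ∈ s, v i, ∑ j ∈ s, v j⟫‖ := by
    rw [inner_self_eq_norm_sq_to_K, norm_pow, RCLike.norm_ofReal, abs_norm]
  _ ≤ ∑ i ∈ s, ‖⟪v i, ∑ j ∈ s, v j⟫‖ := by rw [sum_inner]; exact norm_sum_le _ _
  _ ≤ ∑ i ∈ s, ∑ j ∈ s, ‖⟪v i, v j⟫‖ :=
    sum_le_sum fun i _ => by rw [inner_sum]; exact norm_sum_le _ _

theorem norm_average_sq_le {s : Finset ι} (v : ι → E) {r c : ℝ} (hc : 0 ≤ c)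
    (hr : ∀ i ∈ s, ‖v i‖ = r) (hvc : ∀ i ∈ s, ∀ j ∈ s, i ≠ j → ‖⟪v i, v j⟫‖ ≤ c) :
    ‖(#s : 𝕜)⁻¹ • ∑ i ∈ s, v i‖ ^ 2 ≤ c + (#s : ℝ)⁻¹ * r ^ 2 := by
  classical
  have hrow : ∀ i ∈ s, ∑ j ∈ s, ‖⟪v i, v j⟫‖ ≤ r ^ 2 + #s * c := by
    intro i hi
    have hdiag : ‖⟪v i, v i⟫‖ = r ^ 2 := by
      rw [inner_self_eq_norm_sq_to_K, norm_pow, RCLike.norm_ofReal, abs_norm, hr i hi]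
    have hoff : ∑ j ∈ s.erase i, ‖⟪v i, v j⟫‖ ≤ #s * c := calc
      _ ≤ #(s.erase i) • c := sum_le_card_nsmul _ _ _ fun j hj =>
          hvc i hi j (mem_of_mem_erase hj) (ne_of_mem_erase hj).symm
      _ ≤ #s * c := by
          rw [nsmul_eq_mul]
          exact mul_le_mul_of_nonneg_right (by exact_mod_cast card_erase_le) hc
    rw [← add_sum_erase s _ hi, hdiag]
    linarith
  have hsum : ‖∑ i ∈ s, v i‖ ^ 2 ≤ #s * (r ^ 2 + #s * c) := calc
    _ ≤ ∑ i ∈ s, ∑ j ∈ s, ‖⟪v i, v j⟫‖ := norm_sum_sq_le_sum_sum_norm_inner s v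
    _ ≤ #s • (r ^ 2 + #s * c) := sum_le_card_nsmul _ _ _ hrow
    _ = #s * (r ^ 2 + #s * c) := nsmul_eq_mul _ _
  rcases s.eq_empty_or_nonempty with rfl | hs
  · simpa using hc
  have hn : (0 : ℝ) < #s := by exact_mod_cast hs.card_pos
  rw [norm_smul, norm_inv, RCLike.norm_natCast, mul_pow]
  calc (#s : ℝ)⁻¹ ^ 2 * ‖∑ i ∈ s, v i‖ ^ 2 ≤ (#s : ℝ)⁻¹ ^ 2 * (#s * (r ^ 2 + #s * c)) := by
        gcongr
    _ = c + (#s : ℝ)⁻¹ * r ^ 2 := by field_simp; ring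

theorem inner_average_eq {s : Finset ι} (hs : s.Nonempty) (x : E) (v : ι → E) {a : 𝕜}
    (hv : ∀ i ∈ s, ⟪x, v i⟫ = a) : ⟪x, (#s : 𝕜)⁻¹ • ∑ i ∈ s, v i⟫ = a := by
  have hn : (#s : 𝕜) ≠ 0 := by exact_mod_cast hs.card_pos.ne'
  rw [inner_smul_right, inner_sum, sum_congr rfl hv, sum_const, nsmul_eq_mul,
    inv_mul_cancel_left₀ hn]

end Averaging

namespace Equiv

variable {α : Type*} [DecidableEq α]

theorem swap_apply_of_notMem {s : Finset α} {a b x : α} (ha : a ∈ s) (hb : b ∈ s)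
    (hx : x ∉ s) : swap a b x = x :=
  swap_apply_of_ne_of_ne (by rintro rfl; exact hx ha) (by rintro rfl; exact hx hb)

theorem exists_perm_fixing_compl_map_pair {s : Finset α} {k l m m' : α} (hk : k ∈ s)
    (hl : l ∈ s) (hm : m ∈ s) (hm' : m' ∈ s) (hkl : k ≠ l) (hmm' : m ≠ m') :
    ∃ σ : Perm α, (∀ i ∉ s, σ i = i) ∧ σ k = m ∧ σ l = m' := by
  set t := swap k m l
  have ht : t ∈ s := by
    simp only [t, swap_apply_def]
    split_ifs <;> assumption
  have htm : t ≠ m := fun h =>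
    hkl ((swap k m).injective (h.trans (swap_apply_left k m).symm)).symm
  refine ⟨swap t m' * swap k m, fun i hi => ?_, ?_, ?_⟩
  · rw [Perm.mul_apply, swap_apply_of_notMem hk hm hi, swap_apply_of_notMem ht hm' hi]
  · rw [Perm.mul_apply, swap_apply_left, swap_apply_of_ne_of_ne htm.symm hmm']
  · rw [Perm.mul_apply, swap_apply_left]

end Equiv

section Covariance

open Equiv

variable {𝕜 E α : Type*} [RCLike 𝕜] [NormedAddCommGroup E] [InnerProductSpace 𝕜 E]
  {M : Finset α} {U : Perm α → E →L[𝕜] E} {O : α → E →L[𝕜] E} {Λ : E}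

local notation "⟪" x ", " y "⟫" => inner 𝕜 x y

theorem apply_apply_eq_of_forall_notMem {j : α} (hj : j ∉ M)
    (hO : ∀ σ : Perm α, σ j = j → ∀ m, U σ * O m = O (σ m) * U σ)
    (hΛ : ∀ σ : Perm α, (∀ i ∉ M, σ i = i) → U σ Λ = Λ)
    {σ : Perm α} (hσ : ∀ i ∉ M, σ i = i) (m : α) : U σ (O m Λ) = O (σ m) Λ := by
  simpa [hΛ σ hσ] using congr($(hO σ (hσ j hj) m) Λ)

variable [DecidableEq α]

theorem inner_apply_eq_of_mem (hUinner : ∀ σ (x y : E), ⟪U σ x, U σ y⟫ = ⟪x, y⟫)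
    (hU : ∀ σ : Perm α, (∀ i ∉ M, σ i = i) → ∀ m, U σ (O m Λ) = O (σ m) Λ)
    {Γ : E} (hΓ : ∀ σ : Perm α, (∀ i ∉ M, σ i = i) → U σ Γ = Γ)
    {k m : α} (hk : k ∈ M) (hm : m ∈ M) : ⟪Γ, O m Λ⟫ = ⟪Γ, O k Λ⟫ := by
  have hσ : ∀ i ∉ M, swap k m i = i := fun i => swap_apply_of_notMem hk hm
  rw [← hUinner (swap k m), hΓ _ hσ, hU _ hσ, swap_apply_right]

theorem norm_apply_eq_of_mem (hUinner : ∀ σ (x y : E), ⟪U σ x, U σ y⟫ = ⟪x, y⟫)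
    (hU : ∀ σ : Perm α, (∀ i ∉ M, σ i = i) → ∀ m, U σ (O m Λ) = O (σ m) Λ)
    {k m : α} (hk : k ∈ M) (hm : m ∈ M) : ‖O m Λ‖ = ‖O k Λ‖ := by
  have hσ : ∀ i ∉ M, swap k m i = i := fun i => swap_apply_of_notMem hk hm
  rw [← ((U (swap k m)).toLinearMap.isometryOfInner (hUinner _)).norm_map (O k Λ)]
  simp [hU _ hσ]

theorem inner_apply_apply_eq_of_mem (hUinner : ∀ σ (x y : E), ⟪U σ x, U σ y⟫ = ⟪x, y⟫)
    (hU : ∀ σ : Perm α, (∀ i ∉ M, σ i = i) → ∀ m, U σ (O m Λ) = O (σ m) Λ)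
    {k l m m' : α} (hk : k ∈ M) (hl : l ∈ M) (hm : m ∈ M)
    (hm' : m' ∈ M) (hkl : k ≠ l) (hmm' : m ≠ m') : ⟪O m Λ, O m' Λ⟫ = ⟪O k Λ, O l Λ⟫ := by
  obtain ⟨σ, hσ, rfl, rfl⟩ := exists_perm_fixing_compl_map_pair hk hl hm hm' hkl hmm'
  rw [← hU σ hσ, ← hU σ hσ, hUinner]

end Covariance

theorem stmt10_general {E : Type*} [NormedAddCommGroup E] [InnerProductSpace ℂ E]
    (N : ℕ) (M : Finset (Fin N)) (j k l : Fin N)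
    (hj : j ∉ M) (hk : k ∈ M) (hl : l ∈ M) (hkl : k ≠ l)
    (U : Equiv.Perm (Fin N) → E →L[ℂ] E)
    (hUinner : ∀ σ (x y : E), ⟪U σ x, U σ y⟫ = ⟪x, y⟫)
    (O : Fin N → E →L[ℂ] E)
    (hO : ∀ σ : Equiv.Perm (Fin N), σ j = j → ∀ m, U σ * O m = O (σ m) * U σ)
    (Γ Λ : E)
    (hΓ : ∀ σ : Equiv.Perm (Fin N), (∀ i ∉ M, σ i = i) → U σ Γ = Γ)
    (hΛ : ∀ σ : Equiv.Perm (Fin N), (∀ i ∉ M, σ i = i) → U σ Λ = Λ) :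
    ‖⟪Γ, (O k) Λ⟫‖ ≤
      ‖Γ‖ * Real.sqrt (‖⟪(O k) Λ, (O l) Λ⟫‖ +
        ((M.card : ℝ))⁻¹ * ‖(O k) Λ‖ ^ 2) := by
  have hU : ∀ σ : Equiv.Perm (Fin N), (∀ i ∉ M, σ i = i) → ∀ m, U σ (O m Λ) = O (σ m) Λ :=
    fun _ => apply_apply_eq_of_forall_notMem hj hO hΛ
  set average : E := (#M : ℂ)⁻¹ • ∑ m ∈ M, O m Λ
  have hΓ_average : ⟪Γ, average⟫ = ⟪Γ, O k Λ⟫ :=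
    inner_average_eq ⟨k, hk⟩ Γ _ fun m hm => inner_apply_eq_of_mem hUinner hU hΓ hk hm
  have haverage : ‖average‖ ^ 2 ≤ ‖⟪O k Λ, O l Λ⟫‖ + (#M : ℝ)⁻¹ * ‖O k Λ‖ ^ 2 :=
    norm_average_sq_le _ (norm_nonneg _) (fun m hm => norm_apply_eq_of_mem hUinner hU hk hm)
      fun m hm m' hm' hmm' =>
        (congrArg norm (inner_apply_apply_eq_of_mem hUinner hU hk hl hm hm' hkl hmm')).le
  calc ‖⟪Γ, O k Λ⟫‖ = ‖⟪Γ, average⟫‖ := by rw [hΓ_average]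
    _ ≤ ‖Γ‖ * ‖average‖ := norm_inner_le_norm Γ average
    _ ≤ _ := by gcongr; exact Real.le_sqrt_of_sq_le haverage

theorem stmt10 {E : Type*} [NormedAddCommGroup E] [InnerProductSpace ℂ E]
    (N : ℕ) (M : Finset (Fin N)) (j k l : Fin N)
    (hj : j ∉ M) (hk : k ∈ M) (hl : l ∈ M) (hkl : k ≠ l)
    (U : Equiv.Perm (Fin N) → E →L[ℂ] E)
    (hU1 : U 1 = 1)
    (hUmul : ∀ σ τ, U (σ * τ) = U σ * U τ)
    (hUinner : ∀ σ (x y : E), ⟪U σ x, U σ y⟫ = ⟪x, y⟫)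
    (O : Fin N → E →L[ℂ] E)
    (hO : ∀ σ : Equiv.Perm (Fin N), σ j = j → ∀ m, U σ * O m = O (σ m) * U σ)
    (Γ Λ : E)
    (hΓ : ∀ σ : Equiv.Perm (Fin N), (∀ i ∉ M, σ i = i) → U σ Γ = Γ)
    (hΛ : ∀ σ : Equiv.Perm (Fin N), (∀ i ∉ M, σ i = i) → U σ Λ = Λ) :
    ‖⟪Γ, (O k) Λ⟫‖ ≤
      ‖Γ‖ * Real.sqrt (‖⟪(O k) Λ, (O l) Λ⟫‖ +
        ((M.card : ℝ))⁻¹ * ‖(O k) Λ‖ ^ 2) :=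
  stmt10_general N M j k l hj hk hl hkl U hUinner O hO Γ Λ hΓ hΛ
end

section
/- Let g : ℝ³ × ℝ³ → ℝ be measurable with |g(z₁,z₂)| ≤ G(z₂ − z₁) a.e. for some G ∈ L¹(ℝ³), and φ ∈ L²(ℝ³) ∩ L^∞(ℝ³) normalized. Then the operator p₁ g(z₁,z₂) p₁ on L²(ℝ³ × ℝ³), with p₁ = |φ⟩⟨φ| in the first variable, has operator norm at most ‖φ‖²_{L^∞} ‖G‖_{L¹}. -/
/- STATEMENT 14: For `g` measurable with `|g(z₁,z₂)| ≤ G(z₂−z₁)` a.e., `G ∈ L¹(ℝ³)` and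
normalized `φ ∈ L²(ℝ³) ∩ L^∞(ℝ³)`, the operator `p₁ g(z₁,z₂) p₁` on `L²(ℝ³ × ℝ³)` has
operator norm at most `‖φ‖²_∞ ‖G‖₁`. Expressed as a bilinear form bound, with
`(p₁ψ)(z₁,z₂) = φ(z₁) ∫ φ̄(w) ψ(w,z₂) dw`. -/

open MeasureTheory

noncomputable def condProj (φ : (Fin 3 → ℝ) → ℂ) (ψ : (Fin 3 → ℝ) × (Fin 3 → ℝ) → ℂ) :
    (Fin 3 → ℝ) × (Fin 3 → ℝ) → ℂ :=
  fun z => φ z.1 * ∫ w : Fin 3 → ℝ, (starRingEnd ℂ) (φ w) * ψ (w, z.2)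

/-! Write `p₁ ψ = φ ⊗ ⟨φ, ψ⟩₁`. Bounding `|φ(z₁)|²` by `‖φ‖∞²` and `|g|` by `G(z₂ - z₁)`, the
integrand is dominated by `‖φ‖∞² G(z₂ - z₁) |⟨φ, ψ₁⟩₁(z₂)| |⟨φ, ψ₂⟩₁(z₂)|`. Integrating first
in `z₁`, translation invariance of Lebesgue measure turns `G(z₂ - z₁)` into `‖G‖₁`; Cauchy–Schwarz
in `z₂`, and then in the first variable slice by slice (where `‖φ‖₂ = 1` enters), bounds what is
left by `‖ψ₁‖₂ ‖ψ₂‖₂`. -/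

open scoped ENNReal

namespace MeasureTheory

section Holder

variable {α E F : Type*} [MeasurableSpace α] {μ : Measure α}
  [NormedAddCommGroup E] [NormedAddCommGroup F]

theorem lintegral_enorm_mul_le_eLpNorm_mul_eLpNorm {p q : ℝ≥0∞} [p.HolderConjugate q]
    {f : α → E} {g : α → F} (hf : AEStronglyMeasurable f μ) (hg : AEStronglyMeasurable g μ) :
    ∫⁻ x, ‖f x‖ₑ * ‖g x‖ₑ ∂μ ≤ eLpNorm f p μ * eLpNorm g q μ := by
  have := eLpNorm_le_eLpNorm_mul_eLpNorm_of_nnnorm (p := p) (q := q) (r := 1) hf hg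
    (fun a b => ‖a‖ * ‖b‖) 1 (.of_forall fun x => by simp)
  simpa [eLpNorm_one_eq_lintegral_enorm, enorm_mul] using this

theorem enorm_integral_conj_mul_le {𝕜 : Type*} [RCLike 𝕜] {φ f : α → 𝕜}
    (hφ : AEStronglyMeasurable φ μ) (hf : AEStronglyMeasurable f μ) :
    ‖∫ x, starRingEnd 𝕜 (φ x) * f x ∂μ‖ₑ ≤ eLpNorm φ 2 μ * eLpNorm f 2 μ :=
  calc ‖∫ x, starRingEnd 𝕜 (φ x) * f x ∂μ‖ₑ
      ≤ ∫⁻ x, ‖starRingEnd 𝕜 (φ x) * f x‖ₑ ∂μ := enorm_integral_le_lintegral_enorm _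
    _ = ∫⁻ x, ‖φ x‖ₑ * ‖f x‖ₑ ∂μ := by simp only [enorm_mul, RCLike.enorm_conj]
    _ ≤ eLpNorm φ 2 μ * eLpNorm f 2 μ := lintegral_enorm_mul_le_eLpNorm_mul_eLpNorm hφ hf

end Holder

section Slices

variable {α β E : Type*} [MeasurableSpace α] [MeasurableSpace β] {μ : Measure α} {ν : Measure β}
  [SFinite μ] [SFinite ν]

theorem eLpNorm_eLpNorm_slice_eq {p : ℝ≥0∞} (hp0 : p ≠ 0) (hp : p ≠ ∞) [NormedAddCommGroup E]
    {ψ : α × β → E} (hψ : AEStronglyMeasurable ψ (μ.prod ν)) :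
    eLpNorm (fun y => eLpNorm (fun x => ψ (x, y)) p μ) p ν = eLpNorm ψ p (μ.prod ν) := by
  simp only [eLpNorm_eq_lintegral_rpow_enorm_toReal hp0 hp, enorm_eq_self]
  rw [lintegral_prod_symm _ (hψ.enorm.pow_const _)]
  congr 1
  refine lintegral_congr fun y => ?_
  rw [← ENNReal.rpow_mul, one_div_mul_cancel (ENNReal.toReal_ne_zero.2 ⟨hp0, hp⟩),
    ENNReal.rpow_one]

variable {𝕜 : Type*} [RCLike 𝕜]

/-- The rank-one projection `p₁` onto `φ` in the first variable is `ψ ↦ φ ⊗ partialInner μ φ ψ`. -/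
noncomputable def partialInner (μ : Measure α) (φ : α → 𝕜) (ψ : α × β → 𝕜) (y : β) : 𝕜 :=
  ∫ x, starRingEnd 𝕜 (φ x) * ψ (x, y) ∂μ

theorem AEStronglyMeasurable.partialInner {φ : α → 𝕜} {ψ : α × β → 𝕜}
    (hφ : AEStronglyMeasurable φ μ) (hψ : AEStronglyMeasurable ψ (μ.prod ν)) :
    AEStronglyMeasurable (partialInner μ φ ψ) ν :=
  ((RCLike.continuous_conj.comp_aestronglyMeasurable hφ.comp_fst).mul hψ).prod_swap
    |>.integral_prod_right'

theorem eLpNorm_partialInner_le {φ : α → 𝕜} {ψ : α × β → 𝕜} (hφ : MemLp φ 2 μ)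
    (hψ : AEStronglyMeasurable ψ (μ.prod ν)) :
    eLpNorm (partialInner μ φ ψ) 2 ν ≤ eLpNorm φ 2 μ * eLpNorm ψ 2 (μ.prod ν) := by
  have hslice : ∀ᵐ y ∂ν, ‖partialInner μ φ ψ y‖ₑ ≤
      (eLpNorm φ 2 μ).toNNReal * ‖eLpNorm (fun x => ψ (x, y)) 2 μ‖ₑ := by
    filter_upwards [hψ.prodMk_right] with y hy
    rw [enorm_eq_self, ENNReal.coe_toNNReal hφ.eLpNorm_ne_top]
    exact enorm_integral_conj_mul_le hφ.1 hy
  calc eLpNorm (partialInner μ φ ψ) 2 ν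
      ≤ (eLpNorm φ 2 μ).toNNReal • eLpNorm (fun y => eLpNorm (fun x => ψ (x, y)) 2 μ) 2 ν :=
        eLpNorm_le_nnreal_smul_eLpNorm_of_ae_le_mul' hslice 2
    _ = eLpNorm φ 2 μ * eLpNorm ψ 2 (μ.prod ν) := by
        rw [eLpNorm_eLpNorm_slice_eq two_ne_zero ENNReal.ofNat_ne_top hψ, ENNReal.smul_def,
          smul_eq_mul, ENNReal.coe_toNNReal hφ.eLpNorm_ne_top]

end Slices

section Translation

variable {G : Type*} [MeasurableSpace G] [AddGroup G] [MeasurableAdd₂ G] [MeasurableNeg G]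
  {μ : Measure G} [SFinite μ] [μ.IsAddLeftInvariant] [μ.IsNegInvariant]

theorem lintegral_prod_sub_mul {f h : G → ℝ≥0∞} (hf : AEMeasurable f μ) (hh : AEMeasurable h μ) :
    ∫⁻ z, f (z.2 - z.1) * h z.2 ∂μ.prod μ = (∫⁻ x, f x ∂μ) * ∫⁻ y, h y ∂μ := by
  have hsub : AEMeasurable (fun z : G × G => f (z.2 - z.1)) (μ.prod μ) :=
    hf.comp_quasiMeasurePreserving
      ((quasiMeasurePreserving_sub μ μ).comp Measure.measurePreserving_swap.quasiMeasurePreserving)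
  rw [lintegral_prod_symm (fun z => f (z.2 - z.1) * h z.2) (hsub.mul hh.comp_snd),
    ← lintegral_const_mul'' _ hh]
  refine lintegral_congr fun y => ?_
  dsimp only
  have hfy : AEMeasurable (fun x => f (y - x)) μ :=
    hf.comp_quasiMeasurePreserving (quasiMeasurePreserving_sub_left μ y)
  rw [lintegral_mul_const'' _ hfy, lintegral_sub_left_eq_self f y]

variable {𝕜 : Type*} [RCLike 𝕜]

theorem enorm_integral_partialInner_mul_le {φ : G → 𝕜} {g : G × G → 𝕜} {K : G → ℝ}
    {ψ₁ ψ₂ : G × G → 𝕜} (hφ : AEStronglyMeasurable φ μ) (hK : AEStronglyMeasurable K μ)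
    (hbound : ∀ᵐ z ∂μ.prod μ, ‖g z‖ ≤ K (z.2 - z.1))
    (hψ₁ : AEStronglyMeasurable ψ₁ (μ.prod μ)) (hψ₂ : AEStronglyMeasurable ψ₂ (μ.prod μ)) :
    ‖∫ z, starRingEnd 𝕜 (φ z.1 * partialInner μ φ ψ₁ z.2) * g z *
        (φ z.1 * partialInner μ φ ψ₂ z.2) ∂μ.prod μ‖ₑ ≤
      eLpNorm φ ∞ μ ^ 2 * (∫⁻ x, ‖K x‖ₑ ∂μ) *
        (eLpNorm (partialInner μ φ ψ₁) 2 μ * eLpNorm (partialInner μ φ ψ₂) 2 μ) := by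
  set C := eLpNorm φ ∞ μ
  set P₁ := partialInner μ φ ψ₁
  set P₂ := partialInner μ φ ψ₂
  have hφC : ∀ᵐ z ∂μ.prod μ, ‖φ z.1‖ₑ ≤ C :=
    Measure.quasiMeasurePreserving_fst.ae (enorm_ae_le_eLpNormEssSup φ μ)
  have hpointwise : ∀ᵐ z ∂μ.prod μ,
      ‖starRingEnd 𝕜 (φ z.1 * P₁ z.2) * g z * (φ z.1 * P₂ z.2)‖ₑ ≤
        ‖K (z.2 - z.1)‖ₑ * (C ^ 2 * (‖P₁ z.2‖ₑ * ‖P₂ z.2‖ₑ)) := by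
    filter_upwards [hφC, hbound] with z hφz hgz
    have hgK : ‖g z‖ₑ ≤ ‖K (z.2 - z.1)‖ₑ := enorm_le_iff_norm_le.2 (hgz.trans (le_abs_self _))
    simp only [enorm_mul, RCLike.enorm_conj]
    calc ‖φ z.1‖ₑ * ‖P₁ z.2‖ₑ * ‖g z‖ₑ * (‖φ z.1‖ₑ * ‖P₂ z.2‖ₑ)
        ≤ C * ‖P₁ z.2‖ₑ * ‖K (z.2 - z.1)‖ₑ * (C * ‖P₂ z.2‖ₑ) := by gcongr
      _ = ‖K (z.2 - z.1)‖ₑ * (C ^ 2 * (‖P₁ z.2‖ₑ * ‖P₂ z.2‖ₑ)) := by ring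
  have hP : AEMeasurable (fun y => ‖P₁ y‖ₑ * ‖P₂ y‖ₑ) μ :=
    (hφ.partialInner hψ₁).enorm.mul (hφ.partialInner hψ₂).enorm
  calc _ ≤ ∫⁻ z, ‖starRingEnd 𝕜 (φ z.1 * P₁ z.2) * g z * (φ z.1 * P₂ z.2)‖ₑ ∂μ.prod μ :=
        enorm_integral_le_lintegral_enorm _
    _ ≤ ∫⁻ z, ‖K (z.2 - z.1)‖ₑ * (C ^ 2 * (‖P₁ z.2‖ₑ * ‖P₂ z.2‖ₑ)) ∂μ.prod μ :=
        lintegral_mono_ae hpointwise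
    _ = (∫⁻ x, ‖K x‖ₑ ∂μ) * (C ^ 2 * ∫⁻ y, ‖P₁ y‖ₑ * ‖P₂ y‖ₑ ∂μ) := by
        rw [lintegral_prod_sub_mul hK.enorm (hP.const_mul _), lintegral_const_mul'' _ hP]
    _ ≤ (∫⁻ x, ‖K x‖ₑ ∂μ) * (C ^ 2 * (eLpNorm P₁ 2 μ * eLpNorm P₂ 2 μ)) := by
        gcongr
        exact lintegral_enorm_mul_le_eLpNorm_mul_eLpNorm (hφ.partialInner hψ₁)
          (hφ.partialInner hψ₂)
    _ = C ^ 2 * (∫⁻ x, ‖K x‖ₑ ∂μ) * (eLpNorm P₁ 2 μ * eLpNorm P₂ 2 μ) := by ring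

end Translation

end MeasureTheory

theorem stmt14_general (φ : (Fin 3 → ℝ) → ℂ) (g : (Fin 3 → ℝ) × (Fin 3 → ℝ) → ℝ)
    (G : (Fin 3 → ℝ) → ℝ)
    (hφ2 : MemLp φ 2 volume) (hφtop : MemLp φ ⊤ volume)
    (hφnorm : eLpNorm φ 2 volume = 1)
    (hG : Integrable G volume)
    (hbound : ∀ᵐ z : (Fin 3 → ℝ) × (Fin 3 → ℝ), |g z| ≤ G (z.2 - z.1))
    (ψ₁ ψ₂ : (Fin 3 → ℝ) × (Fin 3 → ℝ) → ℂ)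
    (h1 : MemLp ψ₁ 2 volume) (h2 : MemLp ψ₂ 2 volume) :
    ‖∫ z : (Fin 3 → ℝ) × (Fin 3 → ℝ),
        (starRingEnd ℂ) (condProj φ ψ₁ z) * (g z : ℂ) * condProj φ ψ₂ z‖ ≤
      (eLpNorm φ ⊤ volume).toReal ^ 2 * (∫ w : Fin 3 → ℝ, |G w|) *
        ((eLpNorm ψ₁ 2 volume).toReal * (eLpNorm ψ₂ 2 volume).toReal) := by
  have hbound' : ∀ᵐ z : (Fin 3 → ℝ) × (Fin 3 → ℝ), ‖(g z : ℂ)‖ ≤ G (z.2 - z.1) := by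
    filter_upwards [hbound] with z hz
    rwa [Complex.norm_real, Real.norm_eq_abs]
  have hproj {ψ : (Fin 3 → ℝ) × (Fin 3 → ℝ) → ℂ} (hψ : MemLp ψ 2 volume) :
      eLpNorm (partialInner volume φ ψ) 2 volume ≤ eLpNorm ψ 2 volume :=
    (eLpNorm_partialInner_le hφ2 hψ.1).trans_eq (by rw [hφnorm, one_mul]; rfl)
  have hmain : ‖∫ z : (Fin 3 → ℝ) × (Fin 3 → ℝ),
        (starRingEnd ℂ) (condProj φ ψ₁ z) * (g z : ℂ) * condProj φ ψ₂ z‖ₑ ≤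
      eLpNorm φ ∞ volume ^ 2 * (∫⁻ x, ‖G x‖ₑ) *
        (eLpNorm ψ₁ 2 volume * eLpNorm ψ₂ 2 volume) :=
    (enorm_integral_partialInner_mul_le hφ2.1 hG.1 hbound' h1.1 h2.1).trans
      (by gcongr <;> exact hproj ‹_›)
  have hfinite : eLpNorm φ ∞ volume ^ 2 * (∫⁻ x, ‖G x‖ₑ) *
      (eLpNorm ψ₁ 2 volume * eLpNorm ψ₂ 2 volume) ≠ ∞ := by
    finiteness [hφtop.eLpNorm_lt_top, hG.2, h1.eLpNorm_lt_top, h2.eLpNorm_lt_top]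
  have hGnorm : ∫ w : Fin 3 → ℝ, |G w| = (∫⁻ x, ‖G x‖ₑ).toReal := by
    simp only [← Real.norm_eq_abs, integral_norm_eq_lintegral_enorm hG.1]
  have := ENNReal.toReal_mono hfinite hmain
  rwa [toReal_enorm, ENNReal.toReal_mul, ENNReal.toReal_mul, ENNReal.toReal_mul,
    ENNReal.toReal_pow, ← hGnorm] at this

theorem stmt14 (φ : (Fin 3 → ℝ) → ℂ) (g : (Fin 3 → ℝ) × (Fin 3 → ℝ) → ℝ)
    (G : (Fin 3 → ℝ) → ℝ)
    (hφ2 : MemLp φ 2 volume) (hφtop : MemLp φ ⊤ volume)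
    (hφnorm : eLpNorm φ 2 volume = 1)
    (hg : Measurable g) (hG : Integrable G volume)
    (hbound : ∀ᵐ z : (Fin 3 → ℝ) × (Fin 3 → ℝ), |g z| ≤ G (z.2 - z.1))
    (ψ₁ ψ₂ : (Fin 3 → ℝ) × (Fin 3 → ℝ) → ℂ)
    (h1 : MemLp ψ₁ 2 volume) (h2 : MemLp ψ₂ 2 volume) :
    ‖∫ z : (Fin 3 → ℝ) × (Fin 3 → ℝ),
        (starRingEnd ℂ) (condProj φ ψ₁ z) * (g z : ℂ) * condProj φ ψ₂ z‖ ≤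
      (eLpNorm φ ⊤ volume).toReal ^ 2 * (∫ w : Fin 3 → ℝ, |G w|) *
        ((eLpNorm ψ₁ 2 volume).toReal * (eLpNorm ψ₂ 2 volume).toReal) :=
  stmt14_general φ g G hφ2 hφtop hφnorm hG hbound ψ₁ ψ₂ h1 h2
end
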